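/- arXiv:1801.09863 — 3 statements merged into one kernel-verified Lean document; each statement's English description precedes it below -/
import Mathlib

section
/- Let p be an odd prime. In the truncated algebra A_4 over ℤ/pℤ on X_1, …, X_5, the degree-3 component of E^p(r_1) has coefficient 0 on the monomial X_2X_3X_4 and coefficient 2 on the monomial X_4X_2X_3. -/
/-- The monomial `X_{w₁} ⋯ X_{w_l}` in the free associative `ZMod p`-algebra `T` on
noncommuting indeterminates `X_1, …, X_m`. -/
def magnusMonomial (p m : ℕ) (w : List (Fin m)) : FreeAlgebra (ZMod p) (Fin m) :=
  (w.map (FreeAlgebra.ι (ZMod p))).prod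

/-- The relation generating (as a ring congruence) the two-sided ideal `I^k`, where
`I ⊆ T` is the two-sided ideal generated by `X_1, …, X_m`: every monomial of degree `k`
is set to `0`. -/
def truncRel (p m k : ℕ) :
    FreeAlgebra (ZMod p) (Fin m) → FreeAlgebra (ZMod p) (Fin m) → Prop :=
  fun a b => ∃ w : List (Fin m), w.length = k ∧ a = magnusMonomial p m w ∧ b = 0

/-- The truncated algebra `A_k = T/I^k`. -/
abbrev TruncAlgebra (p m k : ℕ) := RingQuot (truncRel p m k)

/-- The quotient map `T → A_k`. -/
def truncMk (p m k : ℕ) :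
    FreeAlgebra (ZMod p) (Fin m) →+* TruncAlgebra p m k :=
  RingQuot.mkRingHom _

lemma isUnit_one_add_X (p m k : ℕ) (i : Fin m) :
    IsUnit (1 + truncMk p m k (FreeAlgebra.ι (ZMod p) i)) := by
  refine IsNilpotent.isUnit_one_add ⟨k, ?_⟩
  rw [← map_pow]
  have h1 : (FreeAlgebra.ι (ZMod p) i) ^ k = magnusMonomial p m (List.replicate k i) := by
    simp [magnusMonomial, List.map_replicate, List.prod_replicate]
  have h2 : truncMk p m k (magnusMonomial p m (List.replicate k i)) = truncMk p m k 0 :=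
    RingQuot.mkRingHom_rel ⟨List.replicate k i, List.length_replicate, rfl, rfl⟩
  rw [h1, h2, map_zero]

/-- The Magnus `ZMod p`-expansion truncated at degree `k`: the unique group homomorphism
`E^p : F_m → A_kˣ` with `E^p(x_i) = 1 + X_i`. -/
noncomputable def magnus (p m k : ℕ) :
    FreeGroup (Fin m) →* (TruncAlgebra p m k)ˣ :=
  FreeGroup.lift fun i => (isUnit_one_add_X p m k i).unit

/-- The coefficient of the monomial `X_{w₁} ⋯ X_{w_l}` in an element of the free
algebra `T`, via the canonical basis of `T` given by words in `X_1, …, X_m`. -/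
noncomputable def magnusCoeff (p m : ℕ) (w : List (Fin m))
    (t : FreeAlgebra (ZMod p) (Fin m)) : ZMod p :=
  (FreeAlgebra.equivMonoidAlgebraFreeMonoid (R := ZMod p) (X := Fin m) t).coeff
    (FreeMonoid.ofList w)

/-- The generators `x_1, …, x_5` of the free group `F_5` (`xF5 i` is `x_{i+1}`). -/
def xF5 (i : Fin 5) : FreeGroup (Fin 5) := FreeGroup.of i

/-- `Q_i = x_1x_2⁻¹x_3x_4⁻¹x_5x_1⁻¹x_2x_3⁻¹x_4x_5⁻¹ · x_i ·
x_5⁻¹x_4x_3⁻¹x_2x_1⁻¹x_5x_4⁻¹x_3x_2⁻¹x_1 ∈ F_5`. -/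
def QF5 (i : Fin 5) : FreeGroup (Fin 5) :=
  xF5 0 * (xF5 1)⁻¹ * xF5 2 * (xF5 3)⁻¹ * xF5 4 *
  (xF5 0)⁻¹ * xF5 1 * (xF5 2)⁻¹ * xF5 3 * (xF5 4)⁻¹ *
  xF5 i *
  (xF5 4)⁻¹ * xF5 3 * (xF5 2)⁻¹ * xF5 1 * (xF5 0)⁻¹ *
  xF5 4 * (xF5 3)⁻¹ * xF5 2 * (xF5 1)⁻¹ * xF5 0

/-- `r_i = Q_i x_i⁻¹`, the relators of the associated core group of the closure of
the 5-braid `(σ₁σ₂σ₃σ₄)^{10}`. -/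
def rF5 (i : Fin 5) : FreeGroup (Fin 5) := QF5 i * (xF5 i)⁻¹

/-!
The Magnus expansion sends `x_i ↦ 1 + X_i` and `x_i⁻¹ ↦ ∑_{j<k} (-X_i)^j` modulo `I^k`, and the
coefficient of a word `w` in a product is the sum, over all ways of cutting `w` into a prefix and a
suffix, of the products of the coefficients of the factors. For `|w| < k` the truncation does not
affect these coefficients, so the coefficient of `w` in `E^p(x_{i₁}^{ε₁} ⋯ x_{iₙ}^{εₙ})` is the
image in `ℤ/pℤ` of an integer given by a finite recursion on the letters, independent of `p`;
for `r_1` it is evaluated on the reduced word.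
-/

open Finset

section Coefficients

variable {p m : ℕ}

theorem magnusCoeff_zero (w : List (Fin m)) : magnusCoeff p m w 0 = 0 := by
  simp [magnusCoeff]

theorem magnusCoeff_add (w : List (Fin m)) (a b : FreeAlgebra (ZMod p) (Fin m)) :
    magnusCoeff p m w (a + b) = magnusCoeff p m w a + magnusCoeff p m w b := by
  simp [magnusCoeff]

theorem magnusCoeff_smul (w : List (Fin m)) (c : ZMod p) (a : FreeAlgebra (ZMod p) (Fin m)) :
    magnusCoeff p m w (c • a) = c * magnusCoeff p m w a := by
  simp [magnusCoeff]

theorem magnusCoeff_sum {ι : Type*} (s : Finset ι) (w : List (Fin m))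
    (f : ι → FreeAlgebra (ZMod p) (Fin m)) :
    magnusCoeff p m w (∑ i ∈ s, f i) = ∑ i ∈ s, magnusCoeff p m w (f i) := by
  simp [magnusCoeff]

theorem magnusMonomial_nil : magnusMonomial p m [] = 1 := rfl

theorem magnusMonomial_singleton (i : Fin m) :
    magnusMonomial p m [i] = FreeAlgebra.ι (ZMod p) i := by
  simp [magnusMonomial]

theorem magnusMonomial_replicate (n : ℕ) (i : Fin m) :
    magnusMonomial p m (List.replicate n i) = FreeAlgebra.ι (ZMod p) i ^ n := by
  simp [magnusMonomial, List.map_replicate, List.prod_replicate]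

theorem equivMonoidAlgebraFreeMonoid_magnusMonomial (w : List (Fin m)) :
    FreeAlgebra.equivMonoidAlgebraFreeMonoid (magnusMonomial p m w) =
      MonoidAlgebra.single (FreeMonoid.ofList w) 1 := by
  induction w with
  | nil => simp [magnusMonomial, MonoidAlgebra.one_def]
  | cons i w ih =>
    have hι : FreeAlgebra.equivMonoidAlgebraFreeMonoid (FreeAlgebra.ι (ZMod p) i) =
        MonoidAlgebra.single (FreeMonoid.of i) 1 := by
      simp [FreeAlgebra.equivMonoidAlgebraFreeMonoid]
    rw [magnusMonomial, List.map_cons, List.prod_cons, map_mul, ← magnusMonomial, ih, hι,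
      MonoidAlgebra.single_mul_single, one_mul, FreeMonoid.ofList_cons]

theorem magnusCoeff_magnusMonomial (w w' : List (Fin m)) :
    magnusCoeff p m w (magnusMonomial p m w') = if w' = w then 1 else 0 := by
  classical
  rw [magnusCoeff, equivMonoidAlgebraFreeMonoid_magnusMonomial, MonoidAlgebra.coeff_single,
    Finsupp.single_apply]
  exact if_congr FreeMonoid.ofList.injective.eq_iff rfl rfl

theorem magnusCoeff_mul (w : List (Fin m)) (a b : FreeAlgebra (ZMod p) (Fin m)) :
    magnusCoeff p m w (a * b) =
      ∑ n ∈ range (w.length + 1), magnusCoeff p m (w.take n) a * magnusCoeff p m (w.drop n) b := by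
  classical
  let split (n : ℕ) : FreeMonoid (Fin m) × FreeMonoid (Fin m) :=
    (.ofList (w.take n), .ofList (w.drop n))
  have split_injOn : Set.InjOn split (range (w.length + 1)) := by
    intro n hn n' hn' h
    have := congrArg (fun q => q.1.toList.length) h
    simp only [mem_coe, mem_range, split, FreeMonoid.toList_ofList, List.length_take] at hn hn' this
    omega
  have mem_image_split {q : FreeMonoid (Fin m) × FreeMonoid (Fin m)} :
      q ∈ (range (w.length + 1)).image split ↔ q.1 * q.2 = .ofList w := by
    constructor
    · intro h
      obtain ⟨n, -, rfl⟩ := mem_image.1 h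
      simp [split, ← FreeMonoid.ofList_append]
    · intro h
      have hw : q.1.toList ++ q.2.toList = w := by
        simpa using congrArg FreeMonoid.toList h
      refine mem_image.2 ⟨q.1.toList.length, ?_, ?_⟩
      · simp [← hw]
      · simp [split, ← hw]
  rw [magnusCoeff, map_mul, MonoidAlgebra.coeff_mul_antidiag _ _ _ _ mem_image_split,
    sum_image split_injOn]
  rfl

end Coefficients

section Truncation

variable {p m k : ℕ}

theorem truncMk_magnusMonomial {w : List (Fin m)} (hw : w.length = k) :
    truncMk p m k (magnusMonomial p m w) = 0 :=
  (RingQuot.mkRingHom_rel ⟨w, hw, rfl, rfl⟩).trans (map_zero _)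

theorem magnusCoeff_eq_of_rel {a b : FreeAlgebra (ZMod p) (Fin m)}
    (h : RingQuot.Rel (truncRel p m k) a b) {w : List (Fin m)} (hw : w.length < k) :
    magnusCoeff p m w a = magnusCoeff p m w b := by
  induction h generalizing w with
  | of h =>
    obtain ⟨w', hw', rfl, rfl⟩ := h
    rw [magnusCoeff_magnusMonomial, if_neg (by rintro rfl; omega), magnusCoeff_zero]
  | add_left _ ih => rw [magnusCoeff_add, magnusCoeff_add, ih hw]
  | mul_left _ ih =>
    rw [magnusCoeff_mul, magnusCoeff_mul]
    exact sum_congr rfl fun n _ => by rw [ih ((List.take_prefix n w).length_le.trans_lt hw)]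
  | mul_right _ ih =>
    rw [magnusCoeff_mul, magnusCoeff_mul]
    exact sum_congr rfl fun n _ => by rw [ih ((List.drop_suffix n w).length_le.trans_lt hw)]

theorem magnusCoeff_eq_of_truncMk_eq {a b : FreeAlgebra (ZMod p) (Fin m)}
    (h : truncMk p m k a = truncMk p m k b) {w : List (Fin m)} (hw : w.length < k) :
    magnusCoeff p m w a = magnusCoeff p m w b := by
  have hab : Relation.EqvGen (RingQuot.Rel (truncRel p m k)) a b := by
    rw [truncMk, RingQuot.mkRingHom_def] at h
    exact Quot.eqvGen_exact (congrArg RingQuot.toQuot h)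
  have sameCoeff : Equivalence fun a b => magnusCoeff p m w a = magnusCoeff p m w b :=
    ⟨fun _ => rfl, Eq.symm, Eq.trans⟩
  exact sameCoeff.eqvGen_iff.1 (hab.mono fun _ _ h => magnusCoeff_eq_of_rel h hw)

end Truncation

section Expansion

def magnusPolyOfLetter (p m k : ℕ) : Fin m × Bool → FreeAlgebra (ZMod p) (Fin m)
  | (i, true) => 1 + FreeAlgebra.ι (ZMod p) i
  | (i, false) => ∑ j ∈ range k, (-FreeAlgebra.ι (ZMod p) i) ^ j

def magnusPoly (p m k : ℕ) (L : List (Fin m × Bool)) : FreeAlgebra (ZMod p) (Fin m) :=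
  (L.map (magnusPolyOfLetter p m k)).prod

variable {p m k : ℕ}

theorem coe_magnus_of (i : Fin m) :
    (magnus p m k (FreeGroup.of i) : TruncAlgebra p m k) =
      truncMk p m k (1 + FreeAlgebra.ι (ZMod p) i) := by
  rw [magnus, FreeGroup.lift_apply_of, IsUnit.unit_spec, map_add, map_one]

theorem truncMk_magnusPolyOfLetter (a : Fin m × Bool) :
    truncMk p m k (magnusPolyOfLetter p m k a) = magnus p m k (FreeGroup.mk [a]) := by
  obtain ⟨i, _ | _⟩ := a
  · have hinv : FreeGroup.mk [(i, false)] = (FreeGroup.of i)⁻¹ := by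
      simp [FreeGroup.of, FreeGroup.inv_mk, FreeGroup.invRev]
    rw [hinv, map_inv, eq_comm]
    refine Units.inv_eq_of_mul_eq_one_right ?_
    -- `(1 + X) ∑_{j<k} (-X)^j = 1 - (-X)^k` and `X^k ∈ I^k`
    rw [coe_magnus_of, ← map_mul, magnusPolyOfLetter, ← sub_neg_eq_add, mul_neg_geom_sum,
      map_sub, neg_pow, map_mul, ← magnusMonomial_replicate,
      truncMk_magnusMonomial (List.length_replicate ..), mul_zero, sub_zero, map_one]
  · exact (coe_magnus_of i).symm

theorem truncMk_magnusPoly (L : List (Fin m × Bool)) :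
    truncMk p m k (magnusPoly p m k L) = magnus p m k (FreeGroup.mk L) := by
  induction L with
  | nil => simp [magnusPoly, ← FreeGroup.one_eq_mk]
  | cons a L ih =>
    rw [magnusPoly, List.map_cons, List.prod_cons, map_mul, ← magnusPoly, ih,
      truncMk_magnusPolyOfLetter, ← Units.val_mul, ← map_mul, FreeGroup.mul_mk,
      List.singleton_append]

end Expansion

section IntegerCoefficients

def intMagnusCoeffOfLetter {m : ℕ} : Fin m × Bool → List (Fin m) → ℤ
  | (i, true), u => if u = [] ∨ u = [i] then 1 else 0
  | (i, false), u => if u = List.replicate u.length i then (-1) ^ u.length else 0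

def intMagnusCoeff {m : ℕ} : List (Fin m × Bool) → List (Fin m) → ℤ
  | [], w => if w = [] then 1 else 0
  | a :: L, w =>
    ∑ n ∈ range (w.length + 1), intMagnusCoeffOfLetter a (w.take n) * intMagnusCoeff L (w.drop n)

variable {p m k : ℕ}

theorem magnusCoeff_magnusPolyOfLetter (a : Fin m × Bool) {u : List (Fin m)} (hu : u.length < k) :
    magnusCoeff p m u (magnusPolyOfLetter p m k a) = intMagnusCoeffOfLetter a u := by
  obtain ⟨i, _ | _⟩ := a
  · have coeff_neg_pow (j : ℕ) : magnusCoeff p m u ((-FreeAlgebra.ι (ZMod p) i) ^ j) =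
        if List.replicate j i = u then (-1) ^ j else 0 := by
      rw [← neg_one_smul (ZMod p), smul_pow, magnusCoeff_smul, ← magnusMonomial_replicate,
        magnusCoeff_magnusMonomial, mul_ite, mul_one, mul_zero]
    rw [magnusPolyOfLetter, magnusCoeff_sum, sum_eq_single u.length, coeff_neg_pow,
      intMagnusCoeffOfLetter]
    · push_cast
      exact if_congr eq_comm rfl rfl
    · intro j _ hj
      rw [coeff_neg_pow, if_neg (fun h => hj (h ▸ List.length_replicate).symm)]
    · exact fun h => (h (mem_range.2 hu)).elim
  · rw [magnusPolyOfLetter, intMagnusCoeffOfLetter, magnusCoeff_add, ← magnusMonomial_nil,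
      ← magnusMonomial_singleton, magnusCoeff_magnusMonomial, magnusCoeff_magnusMonomial]
    rcases u with _ | ⟨a, _ | ⟨b, v⟩⟩ <;> simp [eq_comm]

theorem magnusCoeff_magnusPoly (L : List (Fin m × Bool)) {w : List (Fin m)} (hw : w.length < k) :
    magnusCoeff p m w (magnusPoly p m k L) = intMagnusCoeff L w := by
  induction L generalizing w with
  | nil =>
    rw [magnusPoly, List.map_nil, List.prod_nil, intMagnusCoeff, ← magnusMonomial_nil,
      magnusCoeff_magnusMonomial]
    push_cast
    exact if_congr eq_comm rfl rfl
  | cons a L ih =>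
    rw [magnusPoly, List.map_cons, List.prod_cons, magnusCoeff_mul, ← magnusPoly, intMagnusCoeff]
    push_cast
    exact sum_congr rfl fun n _ => by
      rw [magnusCoeff_magnusPolyOfLetter a ((List.take_prefix n w).length_le.trans_lt hw),
        ih ((List.drop_suffix n w).length_le.trans_lt hw)]

theorem magnusCoeff_eq_intMagnusCoeff {L : List (Fin m × Bool)} {t : FreeAlgebra (ZMod p) (Fin m)}
    (ht : truncMk p m k t = magnus p m k (FreeGroup.mk L)) {w : List (Fin m)}
    (hw : w.length < k) : magnusCoeff p m w t = intMagnusCoeff L w := by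
  rw [magnusCoeff_eq_of_truncMk_eq (ht.trans (truncMk_magnusPoly L).symm) hw,
    magnusCoeff_magnusPoly L hw]

end IntegerCoefficients

theorem magnus_rF5_coeff_general (p : ℕ) :
    ∀ t : FreeAlgebra (ZMod p) (Fin 5),
      truncMk p 5 4 t = ↑(magnus p 5 4 (rF5 0)) →
        magnusCoeff p 5 [1, 2, 3] t = 0 ∧ magnusCoeff p 5 [3, 1, 2] t = 2 := by
  intro t ht
  rw [← FreeGroup.mk_toWord (x := rF5 0)] at ht
  rw [magnusCoeff_eq_intMagnusCoeff ht (by decide), magnusCoeff_eq_intMagnusCoeff ht (by decide),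
    show intMagnusCoeff (rF5 0).toWord [1, 2, 3] = 0 by decide +kernel,
    show intMagnusCoeff (rF5 0).toWord [3, 1, 2] = 2 by decide +kernel, Int.cast_zero, Int.cast_two]
  exact ⟨rfl, rfl⟩

/-- For an odd prime `p`, in `A_4` over `ℤ/pℤ` on `X_1, …, X_5` the
degree-3 component of `E^p(r_1)` has coefficient `0` on `X_2X_3X_4` and coefficient `2`
on `X_4X_2X_3`.  (The coefficient of a monomial in an element of `A_4` is computed via
any representative in the free algebra `T`.) -/
theorem magnus_rF5_coeff (p : ℕ) (hp : p.Prime) (hodd : Odd p) :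
    ∀ t : FreeAlgebra (ZMod p) (Fin 5),
      truncMk p 5 4 t = ↑(magnus p 5 4 (rF5 0)) →
        magnusCoeff p 5 [1, 2, 3] t = 0 ∧ magnusCoeff p 5 [3, 1, 2] t = 2 :=
  magnus_rF5_coeff_general p
end

section
/- For every odd prime p, the element r_6 ∈ F_6 does not belong to the subgroup W̄_p · γ_{p+1} F_6. -/
/-- `W_n`, the set of `n`-th powers in a group `G`. -/
def powSet (G : Type*) [Group G] (n : ℕ) : Set G := {x | ∃ w : G, x = w ^ n}

/-- `W̄_n`, the normal subgroup of the free group `F_m` generated by the set `W_n`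
of `n`-th powers. -/
def Wbar (m n : ℕ) : Subgroup (FreeGroup (Fin m)) :=
  Subgroup.normalClosure (powSet (FreeGroup (Fin m)) n)

instance (m n : ℕ) : (Wbar m n).Normal := Subgroup.normalClosure_normal

/-- `W̄_n · γ_q F_m`: since both factors are normal subgroups of `F_m`, this product
subgroup equals the join.  (Recall `lowerCentralSeries G 0 = G = γ₁ G`, so
`γ_q G = lowerCentralSeries G (q-1)`.) -/
def WbarGamma (m n q : ℕ) : Subgroup (FreeGroup (Fin m)) :=
  Wbar m n ⊔ (⊤ : Subgroup (FreeGroup (Fin m))).lowerCentralSeries (q - 1)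

instance (m n q : ℕ) : (WbarGamma m n q).Normal := Subgroup.sup_normal _ _

/-- `F^q(m,n) = F_m / (W̄_n · γ_q F_m)`. -/
def BurnsideQuot (m n q : ℕ) : Type := FreeGroup (Fin m) ⧸ WbarGamma m n q

noncomputable instance (m n q : ℕ) : Group (BurnsideQuot m n q) :=
  QuotientGroup.Quotient.group _

/-- The generators `x_1, …, x_6` of the free group `F_6` (`xF6 i` is `x_{i+1}`). -/
def xF6 (i : Fin 6) : FreeGroup (Fin 6) := FreeGroup.of i

/-- `r_6 = (x_1x_2⁻¹x_6x_2⁻¹x_1)⁻¹ · x_4x_3⁻¹x_1x_2⁻¹x_3x_4⁻¹ · x_6 ·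
x_4⁻¹x_3x_2⁻¹x_1x_3⁻¹x_4 ∈ F_6`, one of the relators of the associated core group of
the 2-parallel of the Borromean rings. -/
def rBor6 : FreeGroup (Fin 6) :=
  (xF6 0 * (xF6 1)⁻¹ * xF6 5 * (xF6 1)⁻¹ * xF6 0)⁻¹ *
  (xF6 3 * (xF6 2)⁻¹ * xF6 0 * (xF6 1)⁻¹ * xF6 2 * (xF6 3)⁻¹ *
   xF6 5 *
   (xF6 3)⁻¹ * xF6 2 * (xF6 1)⁻¹ * xF6 0 * (xF6 2)⁻¹ * xF6 3)

/-!
Both `W̄_p` and `γ_{p+1} F_6` lie in the kernel of every homomorphism from `F_6` to a group of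
exponent `p` and nilpotency class at most `p`, so it suffices to find such a group in which `r_6`
survives. Send `x_1, x_3, x_6` to three generators and `x_2, x_4, x_5` to `1`. For `p ≥ 5` the
upper unitriangular `4 × 4` matrices over `𝔽_p` (class `3`, and exponent `p` because `p` divides
`C(p, 2)` and `C(p, 3)`) work: `r_6` goes to the elementary matrix `1 + E₁₄`. For `p = 3` that group
has exponent `9`, and one uses the Burnside group `B(3, 3)` instead, where `r_6` goes to a generator
of the centre.
-/

open scoped commutatorElement

lemma WbarGamma_le_ker {G : Type*} [Group G] {m n q c : ℕ} (φ : FreeGroup (Fin m) →* G)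
    (hexp : ∀ g : G, g ^ n = 1) (hnil : (⊤ : Subgroup G).lowerCentralSeries c = ⊥)
    (hcq : c < q) : WbarGamma m n q ≤ φ.ker := by
  refine sup_le (Subgroup.normalClosure_le_normal ?_) fun w hw => ?_
  · rintro _ ⟨v, rfl⟩
    simp [hexp]
  · have hφw : φ w ∈ (⊤ : Subgroup G).lowerCentralSeries (q - 1) :=
      Subgroup.lowerCentralSeries_mono _ le_top
        (Subgroup.map_lowerCentralSeries _ φ _ ▸ Subgroup.mem_map_of_mem φ hw)
    rw [MonoidHom.mem_ker, ← Subgroup.mem_bot, ← hnil]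
    exact Subgroup.lowerCentralSeries_antitone _ (by omega) hφw

lemma notMem_WbarGamma_of_map_ne_one {G : Type*} [Group G] {m n q c : ℕ}
    {w : FreeGroup (Fin m)} (φ : FreeGroup (Fin m) →* G) (hexp : ∀ g : G, g ^ n = 1)
    (hnil : (⊤ : Subgroup G).lowerCentralSeries c = ⊥) (hcq : c < q) (hw : φ w ≠ 1) :
    w ∉ WbarGamma m n q :=
  fun h => hw (WbarGamma_le_ker φ hexp hnil hcq h)

lemma lowerCentralSeries_three_eq_bot_of_commutator_eq_one {G : Type*} [Group G]
    (h : ∀ x y z w : G, ⁅⁅⁅x, y⁆, z⁆, w⁆ = 1) : (⊤ : Subgroup G).lowerCentralSeries 3 = ⊥ := by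
  rw [Subgroup.lowerCentralSeries_eq_bot_iff_upperCentralSeries_eq_top, eq_top_iff]
  exact fun x _ y z w => h x y z w

/-- Upper unitriangular `4 × 4` matrices over `R`, recorded by their entries above the diagonal;
the group law is matrix multiplication. -/
@[ext] structure UT4 (R : Type*) where
  m12 : R
  m13 : R
  m14 : R
  m23 : R
  m24 : R
  m34 : R

namespace UT4

variable {R : Type*} [CommRing R]

instance : One (UT4 R) := ⟨⟨0, 0, 0, 0, 0, 0⟩⟩

instance : Mul (UT4 R) :=
  ⟨fun u v => ⟨u.m12 + v.m12, u.m13 + v.m13 + u.m12 * v.m23,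
    u.m14 + v.m14 + u.m12 * v.m24 + u.m13 * v.m34, u.m23 + v.m23,
    u.m24 + v.m24 + u.m23 * v.m34, u.m34 + v.m34⟩⟩

instance : Inv (UT4 R) :=
  ⟨fun u => ⟨-u.m12, -u.m13 + u.m12 * u.m23,
    -u.m14 + u.m12 * u.m24 + u.m13 * u.m34 - u.m12 * u.m23 * u.m34, -u.m23,
    -u.m24 + u.m23 * u.m34, -u.m34⟩⟩

@[simp] lemma one_m12 : (1 : UT4 R).m12 = 0 := rfl
@[simp] lemma one_m13 : (1 : UT4 R).m13 = 0 := rfl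
@[simp] lemma one_m14 : (1 : UT4 R).m14 = 0 := rfl
@[simp] lemma one_m23 : (1 : UT4 R).m23 = 0 := rfl
@[simp] lemma one_m24 : (1 : UT4 R).m24 = 0 := rfl
@[simp] lemma one_m34 : (1 : UT4 R).m34 = 0 := rfl

section
variable (u v : UT4 R)
@[simp] lemma mul_m12 : (u * v).m12 = u.m12 + v.m12 := rfl
@[simp] lemma mul_m13 : (u * v).m13 = u.m13 + v.m13 + u.m12 * v.m23 := rfl
@[simp] lemma mul_m14 : (u * v).m14 = u.m14 + v.m14 + u.m12 * v.m24 + u.m13 * v.m34 := rfl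
@[simp] lemma mul_m23 : (u * v).m23 = u.m23 + v.m23 := rfl
@[simp] lemma mul_m24 : (u * v).m24 = u.m24 + v.m24 + u.m23 * v.m34 := rfl
@[simp] lemma mul_m34 : (u * v).m34 = u.m34 + v.m34 := rfl

@[simp] lemma inv_m12 : u⁻¹.m12 = -u.m12 := rfl
@[simp] lemma inv_m13 : u⁻¹.m13 = -u.m13 + u.m12 * u.m23 := rfl
@[simp] lemma inv_m14 :
    u⁻¹.m14 = -u.m14 + u.m12 * u.m24 + u.m13 * u.m34 - u.m12 * u.m23 * u.m34 := rfl
@[simp] lemma inv_m23 : u⁻¹.m23 = -u.m23 := rfl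
@[simp] lemma inv_m24 : u⁻¹.m24 = -u.m24 + u.m23 * u.m34 := rfl
@[simp] lemma inv_m34 : u⁻¹.m34 = -u.m34 := rfl
end

instance : Group (UT4 R) where
  mul_assoc u v w := by ext <;> simp <;> ring
  one_mul u := by ext <;> simp
  mul_one u := by ext <;> simp
  inv_mul_cancel u := by
    ext <;> simp
    ring

lemma pow_eq_mk (u : UT4 R) (n : ℕ) :
    u ^ n = ⟨n * u.m12, n * u.m13 + n.choose 2 * u.m12 * u.m23,
      n * u.m14 + n.choose 2 * (u.m12 * u.m24 + u.m13 * u.m34)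
        + n.choose 3 * u.m12 * u.m23 * u.m34,
      n * u.m23, n * u.m24 + n.choose 2 * u.m23 * u.m34, n * u.m34⟩ := by
  induction n with
  | zero => ext <;> simp
  | succ n ih =>
    have hchoose₂ : ((n + 1).choose 2 : R) = n.choose 2 + n := by
      simp [Nat.choose_succ_succ, add_comm]
    have hchoose₃ : ((n + 1).choose 3 : R) = n.choose 3 + n.choose 2 := by
      simp [Nat.choose_succ_succ, add_comm]
    rw [pow_succ, ih]
    ext <;> simp [hchoose₂, hchoose₃] <;> ring

lemma pow_eq_one_of_charP (p : ℕ) [CharP R p] (hp : p.Prime) (hp3 : 3 < p) (u : UT4 R) :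
    u ^ p = 1 := by
  have hchoose (k : ℕ) (hk0 : k ≠ 0) (hkp : k < p) : (p.choose k : R) = 0 :=
    (CharP.cast_eq_zero_iff R p _).mpr (hp.dvd_choose_self hk0 hkp)
  rw [pow_eq_mk]
  ext <;> simp [hchoose 2 two_ne_zero (by omega), hchoose 3 three_ne_zero hp3]

lemma lowerCentralSeries_three_eq_bot : (⊤ : Subgroup (UT4 R)).lowerCentralSeries 3 = ⊥ := by
  have hγ₂ (x y : UT4 R) : ⁅x, y⁆.m12 = 0 ∧ ⁅x, y⁆.m23 = 0 ∧ ⁅x, y⁆.m34 = 0 := by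
    simp only [commutatorElement_def]
    refine ⟨?_, ?_, ?_⟩ <;> simp
  have hγ₃ (u z : UT4 R) (hu : u.m12 = 0 ∧ u.m23 = 0 ∧ u.m34 = 0) :
      ⁅u, z⁆.m12 = 0 ∧ ⁅u, z⁆.m13 = 0 ∧ ⁅u, z⁆.m23 = 0 ∧ ⁅u, z⁆.m24 = 0 ∧ ⁅u, z⁆.m34 = 0 := by
    obtain ⟨h12, h23, h34⟩ := hu
    simp only [commutatorElement_def]
    refine ⟨?_, ?_, ?_, ?_, ?_⟩ <;> simp [h12, h23, h34]
  have hcentral (v w : UT4 R) (hv : v.m12 = 0 ∧ v.m13 = 0 ∧ v.m23 = 0 ∧ v.m24 = 0 ∧ v.m34 = 0) :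
      ⁅v, w⁆ = 1 := by
    obtain ⟨h12, h13, h23, h24, h34⟩ := hv
    rw [commutatorElement_eq_one_iff_commute]
    ext <;> simp [h12, h13, h23, h24, h34]
    ring
  exact lowerCentralSeries_three_eq_bot_of_commutator_eq_one fun x y z w =>
    hcentral _ w (hγ₃ _ z (hγ₂ x y))

lemma lift_rBor6 :
    FreeGroup.lift ![⟨1, 0, 0, 0, 0, 0⟩, 1, ⟨0, 0, 0, 1, 0, 0⟩, 1, 1, ⟨0, 0, 0, 0, 0, 1⟩] rBor6 =
      (⟨0, 0, 1, 0, 0, 0⟩ : UT4 R) := by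
  ext <;> simp [rBor6, xF6]

end UT4

/-- The free Burnside group `B(3, 3)` of order `3 ^ 7`: `x, y, z` are coordinates on the
abelianisation, `q, r, s` on the commutator layer and `t` on the centre. -/
@[ext] structure B33 where
  x : ZMod 3
  y : ZMod 3
  z : ZMod 3
  q : ZMod 3
  r : ZMod 3
  s : ZMod 3
  t : ZMod 3

namespace B33

instance : One B33 := ⟨⟨0, 0, 0, 0, 0, 0, 0⟩⟩

instance : Mul B33 :=
  ⟨fun u v => ⟨u.x + v.x, u.y + v.y, u.z + v.z,
    u.q + v.q + v.x * u.y, u.r + v.r + v.x * u.z, u.s + v.s + v.y * u.z,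
    u.t + v.t + u.q * v.z - u.r * v.y + u.s * v.x
      + v.x * u.y * u.z + v.x * u.y * v.z - v.x * v.y * u.z⟩⟩

instance : Inv B33 :=
  ⟨fun u => ⟨-u.x, -u.y, -u.z, -u.q + u.x * u.y, -u.r + u.x * u.z, -u.s + u.y * u.z,
    -u.t + u.q * u.z - u.r * u.y + u.s * u.x - 2 * u.x * u.y * u.z⟩⟩

@[simp] lemma one_x : (1 : B33).x = 0 := rfl
@[simp] lemma one_y : (1 : B33).y = 0 := rfl
@[simp] lemma one_z : (1 : B33).z = 0 := rfl
@[simp] lemma one_q : (1 : B33).q = 0 := rfl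
@[simp] lemma one_r : (1 : B33).r = 0 := rfl
@[simp] lemma one_s : (1 : B33).s = 0 := rfl
@[simp] lemma one_t : (1 : B33).t = 0 := rfl

section
variable (u v : B33)
@[simp] lemma mul_x : (u * v).x = u.x + v.x := rfl
@[simp] lemma mul_y : (u * v).y = u.y + v.y := rfl
@[simp] lemma mul_z : (u * v).z = u.z + v.z := rfl
@[simp] lemma mul_q : (u * v).q = u.q + v.q + v.x * u.y := rfl
@[simp] lemma mul_r : (u * v).r = u.r + v.r + v.x * u.z := rfl
@[simp] lemma mul_s : (u * v).s = u.s + v.s + v.y * u.z := rfl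
@[simp] lemma mul_t :
    (u * v).t = u.t + v.t + u.q * v.z - u.r * v.y + u.s * v.x
      + v.x * u.y * u.z + v.x * u.y * v.z - v.x * v.y * u.z := rfl

@[simp] lemma inv_x : u⁻¹.x = -u.x := rfl
@[simp] lemma inv_y : u⁻¹.y = -u.y := rfl
@[simp] lemma inv_z : u⁻¹.z = -u.z := rfl
@[simp] lemma inv_q : u⁻¹.q = -u.q + u.x * u.y := rfl
@[simp] lemma inv_r : u⁻¹.r = -u.r + u.x * u.z := rfl
@[simp] lemma inv_s : u⁻¹.s = -u.s + u.y * u.z := rfl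
@[simp] lemma inv_t :
    u⁻¹.t = -u.t + u.q * u.z - u.r * u.y + u.s * u.x - 2 * u.x * u.y * u.z := rfl
end

lemma three_eq_zero : (3 : ZMod 3) = 0 := rfl

instance : Group B33 where
  mul_assoc u v w := by
    ext <;> simp
    case t => linear_combination w.x * v.y * u.z * three_eq_zero
    all_goals ring
  one_mul u := by ext <;> simp
  mul_one u := by ext <;> simp
  inv_mul_cancel u := by
    ext <;> simp
    ring

lemma pow_three_eq_one (u : B33) : u ^ 3 = 1 := by
  rw [pow_succ, pow_succ, pow_one]
  ext <;> simp <;> ring_nf <;> reduce_mod_char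

lemma lowerCentralSeries_three_eq_bot : (⊤ : Subgroup B33).lowerCentralSeries 3 = ⊥ := by
  have hγ₂ (a b : B33) : ⁅a, b⁆.x = 0 ∧ ⁅a, b⁆.y = 0 ∧ ⁅a, b⁆.z = 0 := by
    simp only [commutatorElement_def]
    refine ⟨?_, ?_, ?_⟩ <;> simp
  have hγ₃ (u b : B33) (hu : u.x = 0 ∧ u.y = 0 ∧ u.z = 0) :
      ⁅u, b⁆.x = 0 ∧ ⁅u, b⁆.y = 0 ∧ ⁅u, b⁆.z = 0 ∧ ⁅u, b⁆.q = 0 ∧ ⁅u, b⁆.r = 0 ∧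
        ⁅u, b⁆.s = 0 := by
    obtain ⟨hx, hy, hz⟩ := hu
    simp only [commutatorElement_def]
    refine ⟨?_, ?_, ?_, ?_, ?_, ?_⟩ <;> simp [hx, hy, hz]
  have hcentral (v b : B33) (hv : v.x = 0 ∧ v.y = 0 ∧ v.z = 0 ∧ v.q = 0 ∧ v.r = 0 ∧ v.s = 0) :
      ⁅v, b⁆ = 1 := by
    obtain ⟨hx, hy, hz, hq, hr, hs⟩ := hv
    rw [commutatorElement_eq_one_iff_commute]
    ext <;> simp [hx, hy, hz, hq, hr, hs]
    ring
  exact lowerCentralSeries_three_eq_bot_of_commutator_eq_one fun a b c d =>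
    hcentral _ d (hγ₃ _ c (hγ₂ a b))

lemma lift_rBor6 :
    FreeGroup.lift ![⟨1, 0, 0, 0, 0, 0, 0⟩, 1, ⟨0, 1, 0, 0, 0, 0, 0⟩, 1, 1, ⟨0, 0, 1, 0, 0, 0, 0⟩]
      rBor6 = (⟨0, 0, 0, 0, 0, 0, -1⟩ : B33) := by
  ext <;> simp [rBor6, xF6]
  decide

end B33

/-- For every odd prime `p`, the element `r_6 ∈ F_6` does not belong
to the subgroup `W̄_p · γ_{p+1} F_6`. -/
theorem rBor6_not_mem_WbarGamma (p : ℕ) (hp : p.Prime) (hodd : Odd p) :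
    rBor6 ∉ WbarGamma 6 p (p + 1) := by
  obtain rfl | hp3 : p = 3 ∨ 3 < p := by
    have := hp.two_le
    have := Nat.odd_iff.mp hodd
    omega
  · exact notMem_WbarGamma_of_map_ne_one _ B33.pow_three_eq_one
      B33.lowerCentralSeries_three_eq_bot (by omega)
      (B33.lift_rBor6.trans_ne fun h => absurd (congrArg B33.t h) (by decide))
  · have : Fact p.Prime := ⟨hp⟩
    exact notMem_WbarGamma_of_map_ne_one _ (UT4.pow_eq_one_of_charP (R := ZMod p) p hp hp3)
      UT4.lowerCentralSeries_three_eq_bot (by omega)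
      (UT4.lift_rBor6.trans_ne fun h => zero_ne_one (congrArg UT4.m14 h).symm)
end

section
/- The element r_6 ∈ F_6 does not belong to the subgroup W̄_4 · γ_5 F_6; indeed, in the truncated algebra A_4 over ℤ/2ℤ on X_1, …, X_6, the degree-3 component of E^2(r_6) has coefficient 1 on the monomial X_2X_4X_6. -/
/-!
Let `w = X₂X₄X₆`. Sending `X_i` to the sum of the elementary matrices `E (a, a + 1)` over the
positions `a` at which `w` has the letter `X_i` defines a representation of `T` by strictly upper
triangular `4 × 4` matrices; the `(a, b)` entry of the image of a monomial `u` is `1` exactly when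
`u` is the subword of `w` between positions `a` and `b`. So it kills `I⁴`, and the `(0, 3)` entry of
the image of `t` is the coefficient of `w` in `t`. Composed with `E²`, it becomes the representation
`x_i ↦ 1 + (image of X_i)` of `F₆` in the unitriangular group `UT₄(𝔽₂)`, and the corner entry of
the image of `r₆` is computed to be `1`.

`UT₄(𝔽₂)` has exponent `4`, since `(1 + N) ^ 4 = 1 + N ^ 4 = 1` in characteristic `2`, and it is
nilpotent of class `3`, since commutators move the filtration by vanishing superdiagonals one
step up. Hence the representation kills `W̄₄ · γ₅F₆` but not `r₆`.
-/

open scoped commutatorElement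

namespace Matrix

variable (R : Type*) [Ring R] (n : ℕ)

def upperFiltration (j : ℕ) : AddSubgroup (Matrix (Fin n) (Fin n) R) where
  carrier := {M | ∀ a b : Fin n, (b : ℕ) < a + j → M a b = 0}
  add_mem' hM hN a b hab := by simp [hM a b hab, hN a b hab]
  zero_mem' _ _ _ := rfl
  neg_mem' hM a b hab := by simp [hM a b hab]

variable {R n}

lemma upperFiltration_antitone : Antitone (upperFiltration R n) :=
  fun _ _ hij _ hM a b hab => hM a b (by omega)

lemma one_mem_upperFiltration_zero : (1 : Matrix (Fin n) (Fin n) R) ∈ upperFiltration R n 0 :=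
  fun _ _ hab => one_apply_ne (Fin.ne_of_gt hab)

lemma mul_mem_upperFiltration {i j : ℕ} {M N : Matrix (Fin n) (Fin n) R}
    (hM : M ∈ upperFiltration R n i) (hN : N ∈ upperFiltration R n j) :
    M * N ∈ upperFiltration R n (i + j) := by
  intro a b hab
  rw [mul_apply]
  refine Finset.sum_eq_zero fun c _ => ?_
  by_cases hc : (c : ℕ) < a + i
  · rw [hM a c hc, zero_mul]
  · rw [hN c b (by omega), mul_zero]

lemma pow_mem_upperFiltration {j : ℕ} {M : Matrix (Fin n) (Fin n) R}
    (hM : M ∈ upperFiltration R n j) (k : ℕ) : M ^ k ∈ upperFiltration R n (j * k) := by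
  induction k with
  | zero => simpa using one_mem_upperFiltration_zero
  | succ k ih => rw [pow_succ, mul_add_one]; exact mul_mem_upperFiltration ih hM

lemma eq_zero_of_mem_upperFiltration {j : ℕ} (hj : n ≤ j) {M : Matrix (Fin n) (Fin n) R}
    (hM : M ∈ upperFiltration R n j) : M = 0 := by
  ext a b
  exact hM a b (by omega)

lemma mul_sub_one_mem_upperFiltration {j : ℕ} {M N : Matrix (Fin n) (Fin n) R}
    (hM : M - 1 ∈ upperFiltration R n j) (hN : N - 1 ∈ upperFiltration R n j) :
    M * N - 1 ∈ upperFiltration R n j := by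
  have hMN : M * N - 1 = (M - 1) * (N - 1) + (M - 1) + (N - 1) := by noncomm_ring
  rw [hMN]
  exact add_mem (add_mem (upperFiltration_antitone le_add_self
    (mul_mem_upperFiltration hM hN)) hM) hN

/-- The inverse is the truncated geometric series `∑ (1 - g) ^ i`. -/
lemma val_inv_sub_one_mem_upperFiltration {j : ℕ} (hj : 1 ≤ j)
    (g : (Matrix (Fin n) (Fin n) R)ˣ)
    (hg : (g : Matrix (Fin n) (Fin n) R) - 1 ∈ upperFiltration R n j) :
    (↑g⁻¹ : Matrix (Fin n) (Fin n) R) - 1 ∈ upperFiltration R n j := by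
  set x : Matrix (Fin n) (Fin n) R := 1 - g
  have hx : x ∈ upperFiltration R n j := by simpa [x] using neg_mem hg
  set s : Matrix (Fin n) (Fin n) R := ∑ i ∈ Finset.range n, x ^ i
  have hs : s ∈ upperFiltration R n 0 := AddSubgroup.sum_mem _ fun i _ =>
    upperFiltration_antitone (Nat.zero_le _) (pow_mem_upperFiltration hx i)
  have hxn : x ^ n = 0 :=
    eq_zero_of_mem_upperFiltration (Nat.le_mul_of_pos_left n hj) (pow_mem_upperFiltration hx n)
  have hinv : (↑g⁻¹ : Matrix (Fin n) (Fin n) R) = s := by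
    refine Units.inv_eq_of_mul_eq_one_right ?_
    simpa [x, s, hxn] using mul_neg_geom_sum x n
  have hs1 : s - 1 = s * x := by
    rw [show s * x = s - s * g by simp [x, mul_sub], ← hinv, Units.inv_mul]
  rw [hinv, hs1, ← zero_add j]
  exact mul_mem_upperFiltration hs hx

variable (R n) in
/-- For `j ≥ 1` the condition on `g⁻¹` follows from the one on `g`
(`mem_unitriangularSubgroup_of_sub_one_mem`); it is built in so that every level is a subgroup. -/
def unitriangularSubgroup (j : ℕ) : Subgroup (Matrix (Fin n) (Fin n) R)ˣ where
  carrier := {g | (g : Matrix (Fin n) (Fin n) R) - 1 ∈ upperFiltration R n j ∧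
    (↑g⁻¹ : Matrix (Fin n) (Fin n) R) - 1 ∈ upperFiltration R n j}
  mul_mem' {g h} hg hh := by
    refine ⟨?_, ?_⟩
    · simpa using mul_sub_one_mem_upperFiltration hg.1 hh.1
    · simpa using mul_sub_one_mem_upperFiltration hh.2 hg.2
  one_mem' := by simp
  inv_mem' hg := by simpa using hg.symm

lemma mem_unitriangularSubgroup_of_sub_one_mem {j : ℕ} (hj : 1 ≤ j)
    {g : (Matrix (Fin n) (Fin n) R)ˣ}
    (hg : (g : Matrix (Fin n) (Fin n) R) - 1 ∈ upperFiltration R n j) :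
    g ∈ unitriangularSubgroup R n j :=
  ⟨hg, val_inv_sub_one_mem_upperFiltration hj g hg⟩

lemma commutator_sub_one_mem_upperFiltration {i j : ℕ} {g h : (Matrix (Fin n) (Fin n) R)ˣ}
    (hg : g ∈ unitriangularSubgroup R n i) (hh : h ∈ unitriangularSubgroup R n j) :
    (↑⁅g, h⁆ : Matrix (Fin n) (Fin n) R) - 1 ∈ upperFiltration R n (i + j) := by
  set G : Matrix (Fin n) (Fin n) R := ↑g
  set H : Matrix (Fin n) (Fin n) R := ↑h
  set G' : Matrix (Fin n) (Fin n) R := ↑g⁻¹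
  set H' : Matrix (Fin n) (Fin n) R := ↑h⁻¹
  have hcomm : (↑⁅g, h⁆ : Matrix (Fin n) (Fin n) R) - 1 =
      ((G - 1) * (H - 1) - (H - 1) * (G - 1)) * (G' * H') := by
    rw [show (G - 1) * (H - 1) - (H - 1) * (G - 1) = G * H - H * G by noncomm_ring, sub_mul]
    simp [G, H, G', H', commutatorElement_def, mul_assoc]
  have hG' : G' ∈ upperFiltration R n 0 := by
    simpa using add_mem (upperFiltration_antitone (Nat.zero_le i) hg.2) one_mem_upperFiltration_zero
  have hH' : H' ∈ upperFiltration R n 0 := by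
    simpa using add_mem (upperFiltration_antitone (Nat.zero_le j) hh.2) one_mem_upperFiltration_zero
  rw [hcomm, ← add_zero (i + j), ← add_zero 0]
  refine mul_mem_upperFiltration (sub_mem (mul_mem_upperFiltration hg.1 hh.1) ?_)
    (mul_mem_upperFiltration hG' hH')
  rw [add_comm i j]
  exact mul_mem_upperFiltration hh.1 hg.1

lemma commutator_mem_unitriangularSubgroup {i j : ℕ} {g h : (Matrix (Fin n) (Fin n) R)ˣ}
    (hg : g ∈ unitriangularSubgroup R n i) (hh : h ∈ unitriangularSubgroup R n j) :
    ⁅g, h⁆ ∈ unitriangularSubgroup R n (i + j) := by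
  refine ⟨commutator_sub_one_mem_upperFiltration hg hh, ?_⟩
  rw [commutatorElement_inv, add_comm]
  exact commutator_sub_one_mem_upperFiltration hh hg

lemma lowerCentralSeries_unitriangularSubgroup_le (q : ℕ) :
    (unitriangularSubgroup R n 1).lowerCentralSeries q ≤ unitriangularSubgroup R n (q + 1) := by
  induction q with
  | zero => exact le_rfl
  | succ q ih =>
    rw [Subgroup.lowerCentralSeries_succ, Subgroup.commutator_le]
    exact fun g hg h hh => commutator_mem_unitriangularSubgroup (ih hg) hh

lemma unitriangularSubgroup_eq_bot {j : ℕ} (hj : n ≤ j) :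
    unitriangularSubgroup R n j = ⊥ := by
  refine (Subgroup.eq_bot_iff_forall _).2 fun g hg => Units.ext ?_
  exact sub_eq_zero.1 (eq_zero_of_mem_upperFiltration hj hg.1)

lemma pow_eq_one_of_mem_unitriangularSubgroup {p e : ℕ} [Fact p.Prime] [CharP R p] [NeZero n]
    (hn : n ≤ p ^ e) {g : (Matrix (Fin n) (Fin n) R)ˣ} (hg : g ∈ unitriangularSubgroup R n 1) :
    g ^ p ^ e = 1 := by
  refine Units.ext ?_
  have hN : ((g : Matrix (Fin n) (Fin n) R) - 1) ^ p ^ e = 0 :=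
    eq_zero_of_mem_upperFiltration (by simpa using hn) (pow_mem_upperFiltration hg.1 (p ^ e))
  rw [Units.val_pow_eq_pow_val, Units.val_one,
    ← add_sub_cancel (1 : Matrix (Fin n) (Fin n) R) (g : Matrix (Fin n) (Fin n) R),
    add_pow_char_pow_of_commute _ _ (Commute.one_left _), hN]
  simp

end Matrix

open Matrix in
theorem WbarGamma_le_ker_s17 {R : Type*} [Ring R] {n m p e q : ℕ} [Fact p.Prime] [CharP R p]
    [NeZero n] (φ : FreeGroup (Fin m) →* (Matrix (Fin n) (Fin n) R)ˣ)
    (hφ : φ.range ≤ unitriangularSubgroup R n 1) (hp : n ≤ p ^ e) (hq : n ≤ q) :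
    WbarGamma m (p ^ e) q ≤ φ.ker := by
  refine sup_le (Subgroup.normalClosure_le_normal ?_) fun x hx => ?_
  · rintro _ ⟨w, rfl⟩
    exact (map_pow φ w _).trans (pow_eq_one_of_mem_unitriangularSubgroup hp (hφ ⟨w, rfl⟩))
  · have hφx : φ x ∈ unitriangularSubgroup R n (q - 1 + 1) := by
      refine lowerCentralSeries_unitriangularSubgroup_le _ ?_
      refine Subgroup.lowerCentralSeries_mono _ hφ ?_
      have hmap := Subgroup.mem_map_of_mem φ hx
      rwa [Subgroup.map_lowerCentralSeries, ← MonoidHom.range_eq_map] at hmap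
    rwa [unitriangularSubgroup_eq_bot (by omega)] at hφx

section PathMatrix

variable (R : Type*) {X : Type*} [DecidableEq X]

def pathMatrix [Semiring R] (w : List X) (x : X) :
    Matrix (Fin (w.length + 1)) (Fin (w.length + 1)) R :=
  Matrix.of fun a b => if (b : ℕ) = a + 1 ∧ w[(a : ℕ)]? = some x then 1 else 0

variable {R}

lemma list_prod_pathMatrix_apply [Semiring R] (w u : List X) (a b : Fin (w.length + 1)) :
    (u.map (pathMatrix R w)).prod a b =
      if (b : ℕ) = a + u.length ∧ u <+: w.drop a then 1 else 0 := by
  induction u generalizing a with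
  | nil => simp [Matrix.one_apply, Fin.ext_iff, eq_comm]
  | cons x u ih =>
    rw [List.map_cons, List.prod_cons, Matrix.mul_apply]
    by_cases ha : (a : ℕ) < w.length
    · set a' : Fin (w.length + 1) := ⟨a + 1, by omega⟩
      have hoff : ∀ c, c ≠ a' → pathMatrix R w x a c = 0 := fun c hc => by
        simp [pathMatrix, a', Fin.ext_iff] at hc ⊢
        omega
      rw [Finset.sum_eq_single a' (fun c _ hc => by rw [hoff c hc, zero_mul]) (by simp), ih,
        List.drop_eq_getElem_cons ha]
      simp only [pathMatrix, Matrix.of_apply, a', List.getElem?_eq_getElem ha, Option.some.injEq,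
        List.length_cons, List.cons_prefix_cons]
      by_cases hx : w[(a : ℕ)] = x <;> simp [hx, eq_comm (a := x), add_assoc, add_comm 1]
    · have hdrop : w.drop a = [] := List.drop_eq_nil_of_le (by omega)
      simp [pathMatrix, hdrop, List.getElem?_eq_none (show w.length ≤ a by omega)]

lemma list_prod_pathMatrix_zero_last [Semiring R] (w u : List X) :
    (u.map (pathMatrix R w)).prod 0 (Fin.last _) = if u = w then 1 else 0 := by
  rw [list_prod_pathMatrix_apply]
  refine if_congr ⟨fun ⟨hlen, hpre⟩ => hpre.eq_of_length (by simpa using hlen.symm), ?_⟩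
    rfl rfl
  rintro rfl
  simp

lemma list_prod_pathMatrix_eq_zero [Semiring R] {w u : List X} (h : w.length < u.length) :
    (u.map (pathMatrix R w)).prod = 0 := by
  ext a b
  rw [list_prod_pathMatrix_apply, if_neg (by omega), Matrix.zero_apply]

lemma pathMatrix_mul_self_eq_zero [Semiring R] {w : List X} (hw : w.Nodup) (x : X) :
    pathMatrix R w x * pathMatrix R w x = 0 := by
  ext a b
  have h := list_prod_pathMatrix_apply (R := R) w [x, x] a b
  simp only [List.map_cons, List.map_nil, List.prod_cons, List.prod_nil, mul_one] at h
  rw [h, if_neg, Matrix.zero_apply]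
  rintro ⟨-, hpre⟩
  exact (by simp : ¬ [x, x].Nodup) ((hw.sublist (List.drop_sublist _ _)).sublist hpre.sublist)

lemma pathMatrix_mem_upperFiltration_one [Ring R] (w : List X) (x : X) :
    pathMatrix R w x ∈ Matrix.upperFiltration R (w.length + 1) 1 := by
  intro a b hab
  simp only [pathMatrix, Matrix.of_apply]
  exact if_neg (by omega)

lemma isUnit_one_add_pathMatrix [Ring R] (w : List X) (x : X) : IsUnit (1 + pathMatrix R w x) :=
  IsNilpotent.isUnit_one_add ⟨w.length + 1, Matrix.eq_zero_of_mem_upperFiltration (by simp)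
    (Matrix.pow_mem_upperFiltration (pathMatrix_mem_upperFiltration_one w x) _)⟩

variable (R) in
noncomputable def pathGroupRep [Ring R] (w : List X) :
    FreeGroup X →* (Matrix (Fin (w.length + 1)) (Fin (w.length + 1)) R)ˣ :=
  FreeGroup.lift fun x => (isUnit_one_add_pathMatrix w x).unit

lemma val_pathGroupRep_of [Ring R] (w : List X) (x : X) :
    (pathGroupRep R w (FreeGroup.of x) : Matrix _ _ R) = 1 + pathMatrix R w x := by
  simp [pathGroupRep]

lemma val_inv_pathGroupRep_of [Ring R] {w : List X} (hw : w.Nodup) (x : X) :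
    (↑(pathGroupRep R w (FreeGroup.of x))⁻¹ : Matrix _ _ R) = 1 - pathMatrix R w x := by
  refine Units.inv_eq_of_mul_eq_one_right ?_
  rw [val_pathGroupRep_of, show ∀ N : Matrix _ _ R, (1 + N) * (1 - N) = 1 - N * N by
    intro N; noncomm_ring, pathMatrix_mul_self_eq_zero hw, sub_zero]

lemma range_pathGroupRep_le [Ring R] (w : List X) :
    (pathGroupRep R w).range ≤ Matrix.unitriangularSubgroup R (w.length + 1) 1 :=
  FreeGroup.range_lift_le <| by
    rintro _ ⟨x, rfl⟩
    refine Matrix.mem_unitriangularSubgroup_of_sub_one_mem le_rfl ?_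
    simpa using pathMatrix_mem_upperFiltration_one w x

variable (R) in
def pathRep [CommRing R] (w : List X) :
    FreeAlgebra R X →ₐ[R] Matrix (Fin (w.length + 1)) (Fin (w.length + 1)) R :=
  FreeAlgebra.lift R (pathMatrix R w)

lemma pathRep_basisFreeMonoid [CommRing R] (w : List X) (u : FreeMonoid X) :
    pathRep R w (FreeAlgebra.basisFreeMonoid R X u) = (u.toList.map (pathMatrix R w)).prod := by
  simp [FreeAlgebra.basisFreeMonoid, FreeAlgebra.equivMonoidAlgebraFreeMonoid, AlgEquiv.ofAlgHom,
    pathRep, FreeMonoid.lift_apply, map_list_prod, Function.comp_def]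

lemma basisFreeMonoid_repr_eq_pathRep [CommRing R] (w : List X) (t : FreeAlgebra R X) :
    (FreeAlgebra.basisFreeMonoid R X).repr t (FreeMonoid.ofList w) =
      pathRep R w t 0 (Fin.last _) := by
  have hcoord : (FreeAlgebra.basisFreeMonoid R X).coord (FreeMonoid.ofList w) =
      Matrix.entryLinearMap R R 0 (Fin.last _) ∘ₗ (pathRep R w).toLinearMap := by
    refine (FreeAlgebra.basisFreeMonoid R X).ext fun u => ?_
    simp only [Module.Basis.coord_apply, Module.Basis.repr_self, LinearMap.comp_apply,
      AlgHom.toLinearMap_apply, pathRep_basisFreeMonoid, Matrix.entryLinearMap_apply,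
      list_prod_pathMatrix_zero_last]
    classical
    rw [Finsupp.single_apply]
    exact if_congr ⟨fun h => h ▸ rfl, fun h => h ▸ (FreeMonoid.ofList_toList u).symm⟩
      rfl rfl
  exact LinearMap.congr_fun hcoord t

end PathMatrix

section Magnus

variable {p m k : ℕ}

lemma pathRep_magnusMonomial (w u : List (Fin m)) :
    pathRep (ZMod p) w (magnusMonomial p m u) = (u.map (pathMatrix (ZMod p) w)).prod := by
  simp [magnusMonomial, map_list_prod, pathRep, Function.comp_def]

noncomputable def truncPathRep (w : List (Fin m)) (hk : w.length < k) :
    TruncAlgebra p m k →+* Matrix (Fin (w.length + 1)) (Fin (w.length + 1)) (ZMod p) :=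
  RingQuot.lift ⟨(pathRep (ZMod p) w).toRingHom, by
    rintro _ _ ⟨u, rfl, rfl, rfl⟩
    simpa [pathRep_magnusMonomial] using list_prod_pathMatrix_eq_zero hk⟩

lemma truncPathRep_truncMk (w : List (Fin m)) (hk : w.length < k)
    (t : FreeAlgebra (ZMod p) (Fin m)) :
    truncPathRep w hk (truncMk p m k t) = pathRep (ZMod p) w t :=
  RingQuot.lift_mkRingHom_apply _ _ t

lemma truncPathRep_magnus (w : List (Fin m)) (hk : w.length < k) (g : FreeGroup (Fin m)) :
    truncPathRep w hk (magnus p m k g : TruncAlgebra p m k) = pathGroupRep (ZMod p) w g := by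
  have hcomp : (Units.map (truncPathRep w hk).toMonoidHom).comp (magnus p m k) =
      pathGroupRep (ZMod p) w := by
    refine FreeGroup.ext_hom _ _ fun i => Units.ext ?_
    simp [magnus, val_pathGroupRep_of, truncPathRep_truncMk, pathRep]
  exact congrArg Units.val (DFunLike.congr_fun hcomp g)

theorem magnusCoeff_eq_pathGroupRep (w : List (Fin m)) (hk : w.length < k)
    (g : FreeGroup (Fin m)) (t : FreeAlgebra (ZMod p) (Fin m))
    (ht : truncMk p m k t = magnus p m k g) :
    magnusCoeff p m w t = (pathGroupRep (ZMod p) w g).val 0 (Fin.last _) := by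
  rw [← truncPathRep_magnus w hk, ← ht, truncPathRep_truncMk]
  exact basisFreeMonoid_repr_eq_pathRep w t

end Magnus

lemma pathGroupRep_rBor6_zero_last :
    (pathGroupRep (ZMod 2) [1, 3, 5] rBor6).val 0 (Fin.last _) = 1 := by
  have hw : [(1 : Fin 6), 3, 5].Nodup := by decide
  simp only [rBor6, xF6, map_mul, map_inv, mul_inv_rev, inv_inv, Units.val_mul,
    val_inv_pathGroupRep_of hw, val_pathGroupRep_of]
  decide

/-- The element `r_6 ∈ F_6` does not belong to `W̄_4 · γ_5 F_6`;
indeed, in `A_4` over `ℤ/2ℤ` on `X_1, …, X_6`, the degree-3 component of `E^2(r_6)` has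
coefficient `1` on `X_2X_4X_6`. -/
theorem rBor6_not_mem_WbarGamma_four :
    rBor6 ∉ WbarGamma 6 4 5 ∧
    ∀ t : FreeAlgebra (ZMod 2) (Fin 6),
      truncMk 2 6 4 t = ↑(magnus 2 6 4 rBor6) →
        magnusCoeff 2 6 [1, 3, 5] t = 1 := by
  refine ⟨fun hr => ?_, fun t ht =>
    (magnusCoeff_eq_pathGroupRep _ (by decide) _ t ht).trans pathGroupRep_rBor6_zero_last⟩
  have hker : rBor6 ∈ (pathGroupRep (ZMod 2) [1, 3, 5]).ker :=
    WbarGamma_le_ker_s17 (p := 2) (e := 2) _ (range_pathGroupRep_le _) le_rfl (by decide) hr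
  have h := pathGroupRep_rBor6_zero_last
  rw [(MonoidHom.mem_ker).1 hker] at h
  exact absurd h (by decide)
end
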